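/- arXiv:2506.08447 — 5 statements merged into one kernel-verified Lean document; each statement's English description precedes it below -/
import Mathlib

section
/- Let a_0, a_1, b_0, b_1, b_2 be real numbers with a_0·a_1 ≠ 0 and b_1 ≤ b_2, and suppose the polynomial p(x,y) = b_0(x + b_1)(x + b_2) + a_0(x + a_1)·y maps ℝ₊² into (0,∞). Then the net (m,n) ↦ 1/p(m,n), (m,n) ∈ ℤ₊², is joint completely monotone if and only if b_1 ≤ a_1 ≤ b_2. -/
open MeasureTheory Filter

set_option maxHeartbeats 1000000

/-- First partial forward difference. -/
def Delta1 (x : ℕ → ℕ → ℝ) : ℕ → ℕ → ℝ := fun m n => x (m + 1) n - x m n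

/-- Second partial forward difference. -/
def Delta2 (x : ℕ → ℕ → ℝ) : ℕ → ℕ → ℝ := fun m n => x m (n + 1) - x m n

/-- A net indexed by ℤ₊² is joint completely monotone. -/
def JointCM (x : ℕ → ℕ → ℝ) : Prop :=
  ∀ i j m n : ℕ, 0 ≤ (-1 : ℝ) ^ (i + j) * (Delta1^[i] (Delta2^[j] x)) m n

/-- Forward difference of a sequence. -/
def DeltaSeq (x : ℕ → ℝ) : ℕ → ℝ := fun m => x (m + 1) - x m

/-- A sequence is completely monotone. -/
def CM (x : ℕ → ℝ) : Prop :=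
  ∀ k m : ℕ, 0 ≤ (-1 : ℝ) ^ k * (DeltaSeq^[k] x) m

/-- A sequence is a Hausdorff moment sequence. -/
def IsHausdorffMoment (β : ℕ → ℝ) : Prop :=
  ∃ μ : Measure ℝ, IsFiniteMeasure μ ∧ μ (Set.Icc (0 : ℝ) 1)ᶜ = 0 ∧
    ∀ m : ℕ, β m = ∫ s in Set.Icc (0 : ℝ) 1, s ^ m ∂μ



namespace Aux

lemma ds_congr {f g : ℕ → ℝ} (h : ∀ m, f m = g m) (k m : ℕ) :
    DeltaSeq^[k] f m = DeltaSeq^[k] g m := by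
  have : f = g := funext h
  rw [this]

lemma iter_add (k : ℕ) : ∀ (f g : ℕ → ℝ) (m : ℕ),
    DeltaSeq^[k] (fun m => f m + g m) m = DeltaSeq^[k] f m + DeltaSeq^[k] g m := by
  induction k with
  | zero => intro f g m; simp
  | succ k ih =>
    intro f g m
    rw [Function.iterate_succ_apply, Function.iterate_succ_apply, Function.iterate_succ_apply]
    rw [ds_congr (g := fun m => DeltaSeq f m + DeltaSeq g m) (fun m => by
      simp [DeltaSeq]; ring) k m]
    exact ih _ _ m

lemma iter_cmul (k : ℕ) : ∀ (c : ℝ) (f : ℕ → ℝ) (m : ℕ),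
    DeltaSeq^[k] (fun m => c * f m) m = c * DeltaSeq^[k] f m := by
  induction k with
  | zero => intro c f m; simp
  | succ k ih =>
    intro c f m
    rw [Function.iterate_succ_apply, Function.iterate_succ_apply]
    rw [ds_congr (g := fun m => c * DeltaSeq f m) (fun m => by simp [DeltaSeq]; ring) k m]
    exact ih _ _ m

lemma iter_zero (k : ℕ) (m : ℕ) : DeltaSeq^[k] (fun _ => (0:ℝ)) m = 0 := by
  induction k generalizing m with
  | zero => simp
  | succ k ih =>
    rw [Function.iterate_succ_apply,
      ds_congr (g := fun _ => (0:ℝ)) (fun m => by simp [DeltaSeq]) k m]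
    exact ih m

lemma iter_sum (k : ℕ) (s : ℕ) (F : ℕ → ℕ → ℝ) (m : ℕ) :
    DeltaSeq^[k] (fun m => ∑ r ∈ Finset.range s, F r m) m
      = ∑ r ∈ Finset.range s, DeltaSeq^[k] (F r) m := by
  induction s with
  | zero =>
    simpa using iter_zero k m
  | succ s ih =>
    rw [ds_congr (g := fun m => (∑ r ∈ Finset.range s, F r m) + F s m)
        (fun m => by rw [Finset.sum_range_succ]) k m,
      iter_add, ih, Finset.sum_range_succ]

lemma iter_shift (k : ℕ) : ∀ (f : ℕ → ℝ) (m : ℕ),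
    DeltaSeq^[k] (fun m => f (m + 1)) m = DeltaSeq^[k] f (m + 1) := by
  induction k with
  | zero => intro f m; simp
  | succ k ih =>
    intro f m
    rw [Function.iterate_succ_apply, Function.iterate_succ_apply]
    rw [ds_congr (g := fun m => DeltaSeq f (m + 1)) (fun m => by simp [DeltaSeq]) k m]
    exact ih _ m

/-- bounded-order complete monotonicity up to order `K` -/
def CMB (K : ℕ) (f : ℕ → ℝ) : Prop :=
  ∀ k ≤ K, ∀ m : ℕ, 0 ≤ (-1 : ℝ) ^ k * (DeltaSeq^[k] f) m

lemma cmb_shift {K : ℕ} {f : ℕ → ℝ} (h : CMB K f) : CMB K (fun m => f (m + 1)) := by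
  intro k hk m
  rw [iter_shift]
  exact h k hk (m + 1)

lemma cmb_negD {K : ℕ} {f : ℕ → ℝ} (h : CMB (K + 1) f) :
    CMB K (fun m => f m - f (m + 1)) := by
  intro k hk m
  have h1 : DeltaSeq^[k] (fun m => f m - f (m + 1)) m = -(DeltaSeq^[k + 1] f) m := by
    rw [Function.iterate_succ_apply]
    rw [ds_congr (f := fun m => f m - f (m+1)) (g := fun m => (-1 : ℝ) * DeltaSeq f m)
      (fun m => by simp only [DeltaSeq]; ring) k m]
    rw [iter_cmul]; ring
  rw [h1]
  have := h (k + 1) (by omega) m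
  calc (0:ℝ) ≤ (-1:ℝ)^(k+1) * (DeltaSeq^[k+1] f) m := this
    _ = (-1:ℝ)^k * -(DeltaSeq^[k+1] f) m := by ring

/-- Key product lemma: bounded complete monotonicity is preserved by products. -/
lemma cmb_mul : ∀ (K : ℕ) (f g : ℕ → ℝ), CMB K f → CMB K g →
    ∀ k ≤ K, ∀ m, 0 ≤ (-1 : ℝ) ^ k * (DeltaSeq^[k] (fun m => f m * g m)) m := by
  intro K
  induction K with
  | zero =>
    intro f g hf hg k hk m
    interval_cases k
    simpa using mul_nonneg (by simpa using hf 0 le_rfl m) (by simpa using hg 0 le_rfl m)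
  | succ K ih =>
    intro f g hf hg k hk m
    match k with
    | 0 => simpa using mul_nonneg (by simpa using hf 0 (by omega) m) (by simpa using hg 0 (by omega) m)
    | (k + 1) =>
      rw [Function.iterate_succ_apply]
      rw [ds_congr (g := fun m => (f (m+1) * (g (m+1) - g m) + (f (m+1) - f m) * g m))
        (fun m => by simp [DeltaSeq]; ring) k m]
      rw [iter_add]
      -- first term : f∘succ * Δg ;  -Δg has CMB K, f∘succ has CMB K
      have hfs : CMB K (fun m => f (m + 1)) := fun k' hk' m =>
        (cmb_shift (fun k'' hk'' => hf k'' (by omega))) k' hk' m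
      have hgD : CMB K (fun m => g m - g (m + 1)) := cmb_negD hg
      have hfD : CMB K (fun m => f m - f (m + 1)) := cmb_negD hf
      have hgs : CMB K g := fun k' hk' m => hg k' (by omega) m
      have t1 : 0 ≤ (-1:ℝ)^k * DeltaSeq^[k] (fun m => f (m+1) * (g m - g (m+1))) m :=
        ih _ _ hfs hgD k (by omega) m
      have t2 : 0 ≤ (-1:ℝ)^k * DeltaSeq^[k] (fun m => (f m - f (m+1)) * g m) m :=
        ih _ _ hfD hgs k (by omega) m
      have e1 : DeltaSeq^[k] (fun m => f (m+1) * (g (m+1) - g m)) m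
          = - DeltaSeq^[k] (fun m => f (m+1) * (g m - g (m+1))) m := by
        rw [ds_congr (g := fun m => (-1:ℝ) * (f (m+1) * (g m - g (m+1)))) (fun m => by ring) k m,
          iter_cmul]; ring
      have e2 : DeltaSeq^[k] (fun m => (f (m+1) - f m) * g m) m
          = - DeltaSeq^[k] (fun m => (f m - f (m+1)) * g m) m := by
        rw [ds_congr (g := fun m => (-1:ℝ) * ((f m - f (m+1)) * g m)) (fun m => by ring) k m,
          iter_cmul]; ring
      rw [e1, e2]
      have hk1 : (-1:ℝ)^(k+1) * (- DeltaSeq^[k] (fun m => f (m+1) * (g m - g (m+1))) m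
            + - DeltaSeq^[k] (fun m => (f m - f (m+1)) * g m) m)
          = (-1:ℝ)^k * DeltaSeq^[k] (fun m => f (m+1) * (g m - g (m+1))) m
            + (-1:ℝ)^k * DeltaSeq^[k] (fun m => (f m - f (m+1)) * g m) m := by ring
      rw [hk1]
      linarith

lemma cm_iff_cmb {f : ℕ → ℝ} : CM f ↔ ∀ K, CMB K f := by
  constructor
  · intro h K k hk m; exact h k m
  · intro h k m; exact h k k le_rfl m

lemma CM.mul {f g : ℕ → ℝ} (hf : CM f) (hg : CM g) : CM (fun m => f m * g m) := by
  intro k m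
  exact cmb_mul k f g (fun k' _ m => hf k' m) (fun k' _ m => hg k' m) k le_rfl m

lemma CM.add {f g : ℕ → ℝ} (hf : CM f) (hg : CM g) : CM (fun m => f m + g m) := by
  intro k m
  rw [iter_add]
  have := hf k m; have := hg k m; nlinarith

lemma CM.cmul {f : ℕ → ℝ} {c : ℝ} (hc : 0 ≤ c) (hf : CM f) : CM (fun m => c * f m) := by
  intro k m
  rw [iter_cmul]
  have := hf k m
  nlinarith

lemma CM.congr {f g : ℕ → ℝ} (h : ∀ m, f m = g m) (hf : CM f) : CM g := by
  intro k m
  rw [← ds_congr h]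
  exact hf k m

/-- complete monotonicity of `m ↦ 1/(m+r)` for `r > 0`. -/
lemma cm_inv_linear : ∀ (k : ℕ) (r : ℝ), 0 < r → ∀ m : ℕ,
    0 ≤ (-1 : ℝ) ^ k * (DeltaSeq^[k] (fun m : ℕ => ((m : ℝ) + r)⁻¹)) m := by
  intro k
  induction k using Nat.strong_induction_on with
  | _ k ih =>
    match k with
    | 0 => intro r hr m; simp; positivity
    | (k + 1) =>
      intro r hr m
      rw [Function.iterate_succ_apply]
      have key : ∀ m : ℕ, DeltaSeq (fun m : ℕ => ((m : ℝ) + r)⁻¹) m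
          = (-1) * (((m:ℝ) + r)⁻¹ * ((m:ℝ) + (r+1))⁻¹) := by
        intro m
        have h1 : ((m:ℝ) + 1 + r) ≠ 0 := by positivity
        have h2 : ((m:ℝ) + r) ≠ 0 := by positivity
        simp only [DeltaSeq]
        push_cast
        field_simp
        ring
      rw [ds_congr (g := fun m => (-1:ℝ) * (((m:ℝ) + r)⁻¹ * ((m:ℝ) + (r+1))⁻¹)) key k m,
        iter_cmul]
      have hb : 0 ≤ (-1:ℝ)^k * DeltaSeq^[k] (fun m : ℕ => ((m:ℝ) + r)⁻¹ * ((m:ℝ) + (r+1))⁻¹) m := by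
        refine cmb_mul k _ _ ?_ ?_ k le_rfl m
        · intro k' hk' m'; exact ih k' (by omega) r hr m'
        · intro k' hk' m'; exact ih k' (by omega) (r + 1) (by linarith) m'
      calc (0:ℝ) ≤ (-1:ℝ)^k * DeltaSeq^[k] (fun m : ℕ => ((m:ℝ) + r)⁻¹ * ((m:ℝ) + (r+1))⁻¹) m := hb
        _ = (-1:ℝ)^(k+1) * ((-1) * DeltaSeq^[k] (fun m : ℕ => ((m:ℝ) + r)⁻¹ * ((m:ℝ) + (r+1))⁻¹) m) := by ring

lemma CM.inv_linear {r : ℝ} (hr : 0 < r) : CM (fun m : ℕ => ((m : ℝ) + r)⁻¹) :=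
  fun k m => cm_inv_linear k r hr m

end Aux

namespace Aux

lemma d1_congr {f g : ℕ → ℕ → ℝ} (h : ∀ m n, f m n = g m n) (i m n : ℕ) :
    Delta1^[i] f m n = Delta1^[i] g m n := by
  have : f = g := funext fun m => funext fun n => h m n
  rw [this]

lemma d2_congr {f g : ℕ → ℕ → ℝ} (h : ∀ m n, f m n = g m n) (j m n : ℕ) :
    Delta2^[j] f m n = Delta2^[j] g m n := by
  have : f = g := funext fun m => funext fun n => h m n
  rw [this]

lemma d2_neg (j : ℕ) : ∀ (x : ℕ → ℕ → ℝ) (m n : ℕ),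
    Delta2^[j] (fun m n => -(x m n)) m n = -(Delta2^[j] x m n) := by
  induction j with
  | zero => intro x m n; simp
  | succ j ih =>
    intro x m n
    rw [Function.iterate_succ_apply, Function.iterate_succ_apply,
      d2_congr (f := Delta2 fun m n => -(x m n)) (g := fun m n => -(Delta2 x m n))
        (fun m n => by simp [Delta2]; ring) j m n]
    exact ih _ m n

lemma d1_neg (i : ℕ) : ∀ (x : ℕ → ℕ → ℝ) (m n : ℕ),
    Delta1^[i] (fun m n => -(x m n)) m n = -(Delta1^[i] x m n) := by
  induction i with
  | zero => intro x m n; simp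
  | succ i ih =>
    intro x m n
    rw [Function.iterate_succ_apply, Function.iterate_succ_apply,
      d1_congr (f := Delta1 fun m n => -(x m n)) (g := fun m n => -(Delta1 x m n))
        (fun m n => by simp [Delta1]; ring) i m n]
    exact ih _ m n

/-- Delta2 iterates commute with Delta1. -/
lemma d2_d1 (j : ℕ) : ∀ (x : ℕ → ℕ → ℝ) (m n : ℕ),
    Delta2^[j] (Delta1 x) m n = Delta1 (Delta2^[j] x) m n := by
  induction j with
  | zero => intro x m n; simp
  | succ j ih =>
    intro x m n
    rw [Function.iterate_succ_apply,
      d2_congr (f := Delta2 (Delta1 x)) (g := Delta1 (Delta2 x))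
        (fun m n => by simp [Delta1, Delta2]; ring) j m n]
    rw [ih (Delta2 x) m n]
    rw [Function.iterate_succ_apply]

lemma jcm_negD1 {x : ℕ → ℕ → ℝ} (h : JointCM x) :
    JointCM (fun m n => x m n - x (m + 1) n) := by
  intro i j m n
  have e : ∀ m n, x m n - x (m+1) n = -(Delta1 x m n) := by intro m n; simp [Delta1]
  rw [d1_congr (fun m n => by
      rw [d2_congr e j m n, d2_neg j (Delta1 x) m n, d2_d1]) i m n]
  rw [d1_neg i (Delta1 (Delta2^[j] x)) m n]
  have e2 : Delta1^[i] (Delta1 (Delta2^[j] x)) m n = Delta1^[i+1] (Delta2^[j] x) m n := by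
    rw [Function.iterate_succ_apply]
  rw [e2]
  have := h (i+1) j m n
  calc (0:ℝ) ≤ (-1)^(i+1+j) * Delta1^[i+1] (Delta2^[j] x) m n := this
    _ = (-1)^(i+j) * -Delta1^[i+1] (Delta2^[j] x) m n := by ring

lemma jcm_negD2 {x : ℕ → ℕ → ℝ} (h : JointCM x) :
    JointCM (fun m n => x m n - x m (n + 1)) := by
  intro i j m n
  have e : ∀ m n, x m n - x m (n+1) = -(Delta2 x m n) := by intro m n; simp [Delta2]
  rw [d1_congr (fun m n => by
      rw [d2_congr e j m n, d2_neg j (Delta2 x) m n]) i m n]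
  rw [d1_neg i (Delta2^[j] (Delta2 x)) m n]
  have e2 : Delta2^[j] (Delta2 x) = Delta2^[j+1] x := by
    rw [Function.iterate_succ_apply]
  rw [e2]
  have := h i (j+1) m n
  calc (0:ℝ) ≤ (-1)^(i+(j+1)) * Delta1^[i] (Delta2^[j+1] x) m n := this
    _ = (-1)^(i+j) * -Delta1^[i] (Delta2^[j+1] x) m n := by ring

lemma d2_shift (j : ℕ) (a b : ℕ) : ∀ (x : ℕ → ℕ → ℝ) (m n : ℕ),
    Delta2^[j] (fun m n => x (m + a) (n + b)) m n = Delta2^[j] x (m + a) (n + b) := by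
  induction j with
  | zero => intro x m n; simp
  | succ j ih =>
    intro x m n
    rw [Function.iterate_succ_apply, Function.iterate_succ_apply,
      d2_congr (f := Delta2 fun m n => x (m+a) (n+b)) (g := fun m n => Delta2 x (m+a) (n+b))
        (fun m n => by simp only [Delta2]; rw [show n + 1 + b = n + b + 1 by omega]) j m n]
    exact ih _ m n

lemma d1_shift (i : ℕ) (a b : ℕ) : ∀ (x : ℕ → ℕ → ℝ) (m n : ℕ),
    Delta1^[i] (fun m n => x (m + a) (n + b)) m n = Delta1^[i] x (m + a) (n + b) := by
  induction i with
  | zero => intro x m n; simp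
  | succ i ih =>
    intro x m n
    rw [Function.iterate_succ_apply, Function.iterate_succ_apply,
      d1_congr (f := Delta1 fun m n => x (m+a) (n+b)) (g := fun m n => Delta1 x (m+a) (n+b))
        (fun m n => by simp only [Delta1]; rw [show m + 1 + a = m + a + 1 by omega]) i m n]
    exact ih _ m n

lemma jcm_shift {x : ℕ → ℕ → ℝ} (h : JointCM x) (a b : ℕ) :
    JointCM (fun m n => x (m + a) (n + b)) := by
  intro i j m n
  rw [d1_congr (fun m n => d2_shift j a b x m n) i m n, d1_shift i a b _ m n]
  exact h i j (m + a) (n + b)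

/-- Any JointCM net restricted along an affine line `k ↦ (k, n0 + s k)` is a CM sequence. -/
lemma diag_nonneg (s n0 : ℕ) : ∀ (K : ℕ) (x : ℕ → ℕ → ℝ), JointCM x → ∀ k : ℕ,
    0 ≤ (-1 : ℝ) ^ K * DeltaSeq^[K] (fun k : ℕ => x k (n0 + s * k)) k := by
  intro K
  induction K with
  | zero =>
    intro x hx k
    simpa using hx 0 0 k (n0 + s * k)
  | succ K ih =>
    intro x hx k
    rw [Function.iterate_succ_apply]
    set w1 : ℕ → ℕ → ℝ := fun m n => x m n - x (m + 1) n with hw1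
    set v : ℕ → ℕ → ℕ → ℝ := fun r m n => x (m + 1) (n + r) - x (m + 1) (n + r + 1) with hv
    have key : ∀ k : ℕ, DeltaSeq (fun k : ℕ => x k (n0 + s * k)) k
        = (-1) * ((fun k : ℕ => w1 k (n0 + s * k)) k
            + ∑ r ∈ Finset.range s, (fun k : ℕ => v r k (n0 + s * k)) k) := by
      intro k
      have tel : ∑ r ∈ Finset.range s, v r k (n0 + s * k)
          = x (k+1) (n0 + s * k) - x (k+1) (n0 + s * k + s) := by
        simp only [hv]
        exact Finset.sum_range_sub' (fun r => x (k+1) (n0 + s * k + r)) s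
      simp only [DeltaSeq, hw1]
      rw [tel]
      have : n0 + s * (k + 1) = n0 + s * k + s := by ring
      rw [this]
      ring
    rw [ds_congr key K k, iter_cmul, iter_add, iter_sum]
    have h1 : 0 ≤ (-1:ℝ)^K * DeltaSeq^[K] (fun k : ℕ => w1 k (n0 + s * k)) k :=
      ih w1 (jcm_negD1 hx) k
    have h2 : ∀ r ∈ Finset.range s,
        0 ≤ (-1:ℝ)^K * DeltaSeq^[K] (fun k : ℕ => v r k (n0 + s * k)) k := by
      intro r _
      have hjcm : JointCM (v r) := jcm_shift (jcm_negD2 hx) 1 r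
      exact ih (v r) hjcm k
    have h2' : 0 ≤ (-1:ℝ)^K * ∑ r ∈ Finset.range s,
        DeltaSeq^[K] (fun k : ℕ => v r k (n0 + s * k)) k := by
      rw [Finset.mul_sum]
      exact Finset.sum_nonneg fun r hr => h2 r hr
    calc (0:ℝ) ≤ (-1:ℝ)^K * DeltaSeq^[K] (fun k : ℕ => w1 k (n0 + s * k)) k
          + (-1:ℝ)^K * ∑ r ∈ Finset.range s, DeltaSeq^[K] (fun k : ℕ => v r k (n0 + s * k)) k := by
          linarith
      _ = (-1:ℝ)^(K+1) * ((-1) * (DeltaSeq^[K] (fun k : ℕ => w1 k (n0 + s * k)) k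
          + ∑ r ∈ Finset.range s, DeltaSeq^[K] (fun k : ℕ => v r k (n0 + s * k)) k)) := by ring

lemma diag_cm {x : ℕ → ℕ → ℝ} (h : JointCM x) (s n0 : ℕ) :
    CM (fun k : ℕ => x k (n0 + s * k)) := fun K k => diag_nonneg s n0 K x h k

end Aux

namespace Aux

/-! ### Complex difference calculus -/

def DeltaC (f : ℕ → ℂ) : ℕ → ℂ := fun m => f (m + 1) - f m

lemma dc_congr {f g : ℕ → ℂ} (h : ∀ m, f m = g m) (k m : ℕ) :
    DeltaC^[k] f m = DeltaC^[k] g m := by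
  have : f = g := funext h
  rw [this]

lemma dc_coe (k : ℕ) : ∀ (y : ℕ → ℝ) (m : ℕ),
    DeltaC^[k] (fun m => ((y m : ℝ) : ℂ)) m = ((DeltaSeq^[k] y m : ℝ) : ℂ) := by
  induction k with
  | zero => intro y m; simp
  | succ k ih =>
    intro y m
    rw [Function.iterate_succ_apply, Function.iterate_succ_apply,
      dc_congr (f := DeltaC fun m => ((y m : ℝ):ℂ)) (g := fun m => ((DeltaSeq y m : ℝ) : ℂ))
        (fun m => by simp [DeltaC, DeltaSeq]) k m]
    exact ih _ m

lemma dc_cmul (k : ℕ) : ∀ (c : ℂ) (f : ℕ → ℂ) (m : ℕ),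
    DeltaC^[k] (fun m => c * f m) m = c * DeltaC^[k] f m := by
  induction k with
  | zero => intro c f m; simp
  | succ k ih =>
    intro c f m
    rw [Function.iterate_succ_apply, Function.iterate_succ_apply,
      dc_congr (g := fun m => c * DeltaC f m) (fun m => by simp [DeltaC]; ring) k m]
    exact ih _ _ m

lemma dc_sub (k : ℕ) : ∀ (f g : ℕ → ℂ) (m : ℕ),
    DeltaC^[k] (fun m => f m - g m) m = DeltaC^[k] f m - DeltaC^[k] g m := by
  induction k with
  | zero => intro f g m; simp
  | succ k ih =>
    intro f g m
    rw [Function.iterate_succ_apply, Function.iterate_succ_apply, Function.iterate_succ_apply,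
      dc_congr (g := fun m => DeltaC f m - DeltaC g m) (fun m => by simp [DeltaC]; ring) k m]
    exact ih _ _ m

/-- closed form for iterated differences of `k ↦ 1/(k+r)` over `ℂ`. -/
lemma dc_inv_closed (r : ℂ) (hr : r.im ≠ 0) : ∀ (K : ℕ) (m : ℕ),
    DeltaC^[K] (fun k : ℕ => ((k : ℂ) + r)⁻¹) m
      = (-1) ^ K * (K.factorial : ℂ) * (∏ l ∈ Finset.range (K + 1), ((m : ℂ) + r + l))⁻¹ := by
  have hfac : ∀ (m : ℕ) (l : ℕ), ((m : ℂ) + r + l) ≠ 0 := by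
    intro m l h0
    have h1 : ((m : ℂ) + r + l).im = r.im := by simp
    rw [h0] at h1
    simp at h1
    exact hr h1.symm
  intro K
  induction K with
  | zero => intro m; simp
  | succ K ih =>
    intro m
    rw [Function.iterate_succ_apply']
    have hmr : ((m : ℂ) + r) ≠ 0 := by simpa using hfac m 0
    have hK1 : ((m : ℂ) + r + ((K:ℂ) + 1)) ≠ 0 := by
      have := hfac m (K+1); push_cast at this; convert this using 2
    have e1 : (∏ l ∈ Finset.range (K + 2), ((m : ℂ) + r + l))
        = ((m : ℂ) + r) * ∏ l ∈ Finset.range (K + 1), (((m+1:ℕ) : ℂ) + r + l) := by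
      rw [Finset.prod_range_succ' (fun l => ((m : ℂ) + r + l)) (K+1)]
      have h0 : ((m:ℂ) + r + ((0:ℕ):ℂ)) = (m:ℂ) + r := by push_cast; ring
      rw [h0, mul_comm]
      congr 1
      apply Finset.prod_congr rfl
      intro l _
      push_cast
      ring
    have e2 : (∏ l ∈ Finset.range (K + 2), ((m : ℂ) + r + l))
        = (∏ l ∈ Finset.range (K + 1), ((m : ℂ) + r + l)) * ((m : ℂ) + r + ((K:ℂ) + 1)) := by
      rw [Finset.prod_range_succ]
      push_cast
      ring
    have b1 : (∏ l ∈ Finset.range (K+1), (((m+1:ℕ):ℂ) + r + l))⁻¹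
        = ((m : ℂ) + r) * (∏ l ∈ Finset.range (K + 2), ((m : ℂ) + r + l))⁻¹ := by
      rw [e1, mul_inv, ← mul_assoc, mul_inv_cancel₀ hmr, one_mul]
    have a1 : (∏ l ∈ Finset.range (K+1), ((m:ℂ) + r + l))⁻¹
        = ((m : ℂ) + r + ((K:ℂ)+1)) * (∏ l ∈ Finset.range (K + 2), ((m : ℂ) + r + l))⁻¹ := by
      rw [e2, mul_inv, mul_comm ((∏ l ∈ Finset.range (K + 1), ((m : ℂ) + r + l))⁻¹) _,
        ← mul_assoc, mul_inv_cancel₀ hK1, one_mul]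
    simp only [DeltaC]
    rw [ih m, ih (m+1), b1, a1]
    push_cast [Nat.factorial_succ]
    ring

/-! ### Polar form of the products -/

noncomputable def theta (σ τ : ℝ) (K : ℕ) : ℝ :=
  ∑ l ∈ Finset.range (K + 1), Real.arctan (τ / (σ + l))

noncomputable def rad (σ τ : ℝ) (K : ℕ) : ℝ :=
  ∏ l ∈ Finset.range (K + 1), Real.sqrt ((σ + l) ^ 2 + τ ^ 2)

lemma rad_pos {σ τ : ℝ} (hσ : 0 < σ) (hτ : 0 < τ) (K : ℕ) : 0 < rad σ τ K := by
  apply Finset.prod_pos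
  intro l _
  apply Real.sqrt_pos.2
  positivity

lemma polar_factor {a τ : ℝ} (ha : 0 < a) (hτ : 0 < τ) :
    (a : ℂ) + (τ:ℝ) * Complex.I
      = (Real.sqrt (a ^ 2 + τ ^ 2) : ℂ)
        * Complex.exp ((Real.arctan (τ / a) : ℝ) * Complex.I) := by
  rw [Complex.exp_mul_I, ← Complex.ofReal_cos, ← Complex.ofReal_sin]
  have hs : Real.sqrt (a ^ 2 + τ ^ 2) = a * Real.sqrt (1 + (τ / a) ^ 2) := by
    rw [show a * Real.sqrt (1 + (τ/a)^2) = Real.sqrt (a^2) * Real.sqrt (1 + (τ/a)^2) by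
        rw [Real.sqrt_sq ha.le],
      ← Real.sqrt_mul (by positivity)]
    congr 1
    field_simp
  have hd : Real.sqrt (1 + (τ / a) ^ 2) ≠ 0 := by positivity
  have hre : Real.sqrt (a^2+τ^2) * Real.cos (Real.arctan (τ/a)) = a := by
    rw [Real.cos_arctan, hs]
    field_simp
  have him : Real.sqrt (a^2+τ^2) * Real.sin (Real.arctan (τ/a)) = τ := by
    rw [Real.sin_arctan, hs]
    field_simp
  calc (a : ℂ) + (τ:ℝ) * Complex.I
      = ((Real.sqrt (a^2+τ^2) * Real.cos (Real.arctan (τ/a)) : ℝ) : ℂ)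
        + ((Real.sqrt (a^2+τ^2) * Real.sin (Real.arctan (τ/a)) : ℝ) : ℂ) * Complex.I := by
        rw [hre, him]
    _ = (Real.sqrt (a ^ 2 + τ ^ 2) : ℂ)
        * (Real.cos (Real.arctan (τ / a)) + Real.sin (Real.arctan (τ / a)) * Complex.I) := by
        push_cast
        ring

lemma polar_prod {σ τ : ℝ} (hσ : 0 < σ) (hτ : 0 < τ) (K : ℕ) :
    (∏ l ∈ Finset.range (K + 1), (((σ + l : ℝ) : ℂ) + (τ:ℝ) * Complex.I))
      = (rad σ τ K : ℂ) * Complex.exp ((theta σ τ K : ℝ) * Complex.I) := by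
  induction K with
  | zero =>
    have e1 : theta σ τ 0 = Real.arctan (τ / (σ + ((0:ℕ):ℝ))) := by
      simp only [theta]; rw [Finset.sum_range_one]
    have e2 : rad σ τ 0 = Real.sqrt ((σ + ((0:ℕ):ℝ))^2 + τ^2) := by
      simp only [rad]; rw [Finset.prod_range_one]
    rw [Finset.prod_range_one, e1, e2]
    exact polar_factor (a := σ + ((0:ℕ):ℝ)) (by simpa using hσ) hτ
  | succ K ih =>
    have hth : theta σ τ (K+1) = theta σ τ K + Real.arctan (τ / (σ + ((K+1:ℕ):ℝ))) := by
      simp only [theta]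
      rw [Finset.sum_range_succ]
    have hrd : rad σ τ (K+1) = rad σ τ K * Real.sqrt ((σ + ((K+1:ℕ):ℝ))^2 + τ^2) := by
      simp only [rad]
      rw [Finset.prod_range_succ]
    rw [Finset.prod_range_succ, ih,
      polar_factor (a := σ + ((K+1:ℕ):ℝ)) (by positivity) hτ, hth, hrd]
    rw [Complex.ofReal_add, add_mul, Complex.exp_add]
    push_cast
    ring

/-! ### arctan lower bound and divergence of the angle sums -/

lemma arctan_lb {t : ℝ} (ht : 0 ≤ t) : t / (1 + t) ≤ Real.arctan t := by
  have hder : ∀ x : ℝ, 0 < x → HasDerivAt (fun t : ℝ => Real.arctan t - t / (1 + t))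
      (1 / (1 + x ^ 2) - 1 / (1 + x) ^ 2) x := by
    intro x hx
    have hne : (1 + x) ≠ 0 := by positivity
    have hd : HasDerivAt (fun t : ℝ => t / (1 + t))
        ((1 * (1 + x) - x * 1) / (1 + x) ^ 2) x :=
      (hasDerivAt_id' (x := x)).div ((hasDerivAt_id' (x := x)).const_add 1) hne
    have hd' : HasDerivAt (fun t : ℝ => t / (1 + t)) (1 / (1 + x) ^ 2) x := by
      convert hd using 1; field_simp; ring
    exact (Real.hasDerivAt_arctan x).sub hd'
  have key : MonotoneOn (fun t : ℝ => Real.arctan t - t / (1 + t)) (Set.Ici 0) := by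
    apply monotoneOn_of_deriv_nonneg (convex_Ici 0)
    · apply ContinuousOn.sub Real.continuous_arctan.continuousOn
      apply ContinuousOn.div continuousOn_id (by fun_prop)
      intro x hx
      simp only [Set.mem_Ici] at hx
      positivity
    · intro x hx
      simp only [interior_Ici, Set.mem_Ioi] at hx
      exact (hder x hx).differentiableAt.differentiableWithinAt
    · intro x hx
      simp only [interior_Ici, Set.mem_Ioi] at hx
      rw [(hder x hx).deriv]
      have hle : 1 + x ^ 2 ≤ (1 + x) ^ 2 := by nlinarith
      have h0 : (0:ℝ) < 1 + x ^ 2 := by positivity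
      have := one_div_le_one_div_of_le h0 hle
      linarith
  have h2 := key (Set.mem_Ici.2 le_rfl) (Set.mem_Ici.2 ht) ht
  simp only at h2
  norm_num at h2
  linarith

lemma theta_tendsto {σ τ : ℝ} (hσ : 0 < σ) (hτ : 0 < τ) :
    Filter.Tendsto (theta σ τ) Filter.atTop Filter.atTop := by
  have c0 : 0 < τ / (σ + τ + 1) := by positivity
  have hlow : ∀ K, (τ / (σ + τ + 1)) * ∑ l ∈ Finset.range (K + 1), 1 / ((l:ℝ) + 1)
      ≤ theta σ τ K := by
    intro K
    rw [Finset.mul_sum]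
    apply Finset.sum_le_sum
    intro l _
    have hl0 : (0:ℝ) ≤ l := Nat.cast_nonneg l
    have hden : (0:ℝ) < σ + l := by positivity
    have hR : (τ/(σ+(l:ℝ)))/(1 + τ/(σ+(l:ℝ))) = τ/(σ+(l:ℝ)+τ) := by
      rw [eq_div_iff (by positivity)]
      field_simp
    have harc : τ/(σ+(l:ℝ)+τ) ≤ Real.arctan (τ / (σ + (l:ℝ))) := by
      rw [← hR]
      exact arctan_lb (by positivity)
    have hstep : τ / (σ + τ + 1) * (1 / ((l:ℝ) + 1)) ≤ τ/(σ+(l:ℝ)+τ) := by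
      rw [div_mul_div_comm, mul_one]
      apply div_le_div_of_nonneg_left hτ.le (by positivity)
      nlinarith
    linarith
  apply Filter.tendsto_atTop_mono hlow
  apply Filter.Tendsto.const_mul_atTop c0
  have h1 := Real.tendsto_sum_range_one_div_nat_succ_atTop
  have comp : Filter.Tendsto (fun K : ℕ => K + 1) Filter.atTop Filter.atTop :=
    Filter.tendsto_add_atTop_nat 1
  have h2 := h1.comp comp
  exact h2

end Aux

namespace Aux

lemma not_cm_inv_quadratic (q2 q1 q0 : ℝ) (h2 : 0 < q2) (h1 : 0 < q1)
    (hD : q1 ^ 2 < 4 * q2 * q0) :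
    ¬ CM (fun k : ℕ => (q2 * (k:ℝ) ^ 2 + q1 * (k:ℝ) + q0)⁻¹) := by
  intro hcm
  set σ : ℝ := q1 / (2 * q2) with hσdef
  have hσ : 0 < σ := by positivity
  have hq0 : 0 < q0 := by nlinarith
  have hττ : 0 < q0 / q2 - σ ^ 2 := by
    rw [hσdef, div_pow, sub_pos, div_lt_div_iff₀ (by positivity) (by positivity)]
    nlinarith
  set τ : ℝ := Real.sqrt (q0 / q2 - σ ^ 2) with hτdef
  have hτ : 0 < τ := Real.sqrt_pos.2 hττ
  have hτsq : τ ^ 2 = q0 / q2 - σ ^ 2 := Real.sq_sqrt hττ.le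
  set ρ : ℂ := (σ : ℂ) + (τ:ℝ) * Complex.I with hρdef
  have hρim : ρ.im = τ := by simp [hρdef]
  have hρbim : ((starRingEnd ℂ) ρ).im = -τ := by simp [hρdef]
  set y : ℕ → ℝ := fun k : ℕ => (q2 * (k:ℝ) ^ 2 + q1 * (k:ℝ) + q0)⁻¹ with hydef
  set c : ℂ := ((q2:ℂ) * (-2 * (τ:ℝ) * Complex.I))⁻¹ with hcdef
  have hQfact : ∀ k : ℕ, (q2 * (k:ℝ)^2 + q1 * (k:ℝ) + q0) = q2 * (((k:ℝ) + σ)^2 + τ^2) := by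
    intro k
    rw [hτsq, hσdef]
    field_simp
    ring
  have hkρ : ∀ k : ℕ, ((k:ℂ) + ρ) ≠ 0 := by
    intro k h0
    have h1 : ((k:ℂ) + ρ).im = τ := by simp [hρdef]
    rw [h0] at h1; simp at h1; exact hτ.ne h1
  have hkρb : ∀ k : ℕ, ((k:ℂ) + (starRingEnd ℂ) ρ) ≠ 0 := by
    intro k h0
    have h1 : ((k:ℂ) + (starRingEnd ℂ) ρ).im = -τ := by simp [hρdef]
    rw [h0] at h1; simp at h1; exact hτ.ne h1.symm
  have yC : ∀ k : ℕ, ((y k : ℝ) : ℂ)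
      = c * (((k:ℂ) + ρ)⁻¹ - ((k:ℂ) + (starRingEnd ℂ) ρ)⁻¹) := by
    intro k
    have hprod : ((k:ℂ) + ρ) * ((k:ℂ) + (starRingEnd ℂ) ρ)
        = ((((k:ℝ) + σ)^2 + τ^2 : ℝ) : ℂ) := by
      rw [hρdef]
      simp only [map_add, Complex.conj_ofReal, map_mul, Complex.conj_I]
      push_cast
      ring_nf
      rw [Complex.I_sq]
      ring
    have hnum : ((k:ℂ) + (starRingEnd ℂ) ρ) - ((k:ℂ) + ρ) = -2 * (τ:ℝ) * Complex.I := by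
      rw [hρdef]
      simp only [map_add, Complex.conj_ofReal, map_mul, Complex.conj_I]
      ring
    rw [inv_sub_inv (hkρ k) (hkρb k), hnum, hprod]
    rw [hydef]
    simp only
    rw [hQfact k, hcdef]
    have hde : ((((k:ℝ) + σ)^2 + τ^2 : ℝ) : ℂ) ≠ 0 := by
      rw [Complex.ofReal_ne_zero]; positivity
    have hq2 : ((q2:ℝ) : ℂ) ≠ 0 := by rw [Complex.ofReal_ne_zero]; exact h2.ne'
    have hI : (-2 * ((τ:ℝ):ℂ) * Complex.I) ≠ 0 := by
      apply mul_ne_zero (mul_ne_zero (by norm_num) _) Complex.I_ne_zero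
      rw [Complex.ofReal_ne_zero]; exact hτ.ne'
    rw [mul_inv]
    rw [show ((q2:ℂ) * (-2 * ((τ:ℝ):ℂ) * Complex.I))⁻¹ * (-2 * ((τ:ℝ):ℂ) * Complex.I / ((((k:ℝ) + σ)^2 + τ^2 : ℝ) : ℂ))
        = ((q2:ℂ))⁻¹ * ((((k:ℝ) + σ)^2 + τ^2 : ℝ) : ℂ)⁻¹
          * ((-2 * ((τ:ℝ):ℂ) * Complex.I)⁻¹ * (-2 * ((τ:ℝ):ℂ) * Complex.I)) by
      rw [mul_inv]; field_simp]
    rw [inv_mul_cancel₀ hI, mul_one]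
    push_cast
    rfl
  -- the key positivity of sines
  have hsin : ∀ K : ℕ, 0 ≤ Real.sin (theta σ τ K) := by
    intro K
    have h0 := hcm K 0
    have hc1 : ((DeltaSeq^[K] y 0 : ℝ) : ℂ) = DeltaC^[K] (fun k => ((y k : ℝ):ℂ)) 0 :=
      (dc_coe K y 0).symm
    rw [dc_congr yC K 0] at hc1
    rw [dc_cmul] at hc1
    rw [dc_sub K (fun k : ℕ => ((k:ℂ) + ρ)⁻¹) (fun k : ℕ => ((k:ℂ) + (starRingEnd ℂ) ρ)⁻¹) 0] at hc1
    rw [dc_inv_closed ρ (by rw [hρim]; exact hτ.ne') K 0,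
      dc_inv_closed ((starRingEnd ℂ) ρ) (by rw [hρbim]; simpa using hτ.ne') K 0] at hc1
    have hP : (∏ l ∈ Finset.range (K + 1), (((0:ℕ) : ℂ) + ρ + l))
        = (rad σ τ K : ℂ) * Complex.exp ((theta σ τ K : ℝ) * Complex.I) := by
      rw [← polar_prod hσ hτ K]
      apply Finset.prod_congr rfl
      intro l _
      rw [hρdef]
      push_cast
      ring
    have hPb : (∏ l ∈ Finset.range (K + 1), (((0:ℕ) : ℂ) + (starRingEnd ℂ) ρ + l))
        = (rad σ τ K : ℂ) * Complex.exp (-((theta σ τ K : ℝ) * Complex.I)) := by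
      have hc := congrArg (starRingEnd ℂ) hP
      rw [map_prod] at hc
      have e1 : ∀ l ∈ Finset.range (K+1),
          (starRingEnd ℂ) (((0:ℕ):ℂ) + ρ + (l:ℂ)) = ((0:ℕ):ℂ) + (starRingEnd ℂ) ρ + (l:ℂ) := by
        intro l _; simp
      rw [Finset.prod_congr rfl e1] at hc
      rw [hc, map_mul, Complex.conj_ofReal, ← Complex.exp_conj]
      congr 1
      simp
    rw [hP, hPb] at hc1
    set th : ℝ := theta σ τ K with hthdef
    set R : ℝ := rad σ τ K with hRdef
    have hR : 0 < R := rad_pos hσ hτ K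
    set S : ℝ := Real.sin th with hSdef
    set Cs : ℝ := Real.cos th with hCdef
    have hexp1 : Complex.exp ((th:ℝ) * Complex.I) = (Cs:ℂ) + (S:ℝ) * Complex.I := by
      rw [Complex.exp_mul_I, ← Complex.ofReal_cos, ← Complex.ofReal_sin]
    have hexp2 : Complex.exp (-((th:ℝ) * Complex.I)) = (Cs:ℂ) - (S:ℝ) * Complex.I := by
      have e1 : -(((th:ℝ):ℂ) * Complex.I) = ((-th:ℝ):ℂ) * Complex.I := by push_cast; ring
      rw [e1, Complex.exp_mul_I, hSdef, hCdef]
      push_cast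
      rw [Complex.cos_neg, Complex.sin_neg]
      ring
    rw [hexp1, hexp2] at hc1
    have py : ((Cs:ℝ):ℂ)^2 + ((S:ℝ):ℂ)^2 = 1 := by
      have hp : Cs^2 + S^2 = 1 := by
        rw [hCdef, hSdef, add_comm]; exact Real.sin_sq_add_cos_sq th
      exact_mod_cast congrArg (fun t : ℝ => (t:ℂ)) hp
    have hunit : ((Cs:ℂ) + (S:ℝ) * Complex.I) * ((Cs:ℂ) - (S:ℝ) * Complex.I) = 1 := by
      linear_combination (-(((S:ℝ):ℂ))^2) * Complex.I_sq + py
    have hinv1 : (((R:ℝ):ℂ) * ((Cs:ℂ) + (S:ℝ) * Complex.I))⁻¹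
        = ((R:ℝ):ℂ)⁻¹ * ((Cs:ℂ) - (S:ℝ) * Complex.I) := by
      rw [mul_inv]
      congr 1
      exact inv_eq_of_mul_eq_one_left (by rw [mul_comm]; exact hunit)
    have hinv2 : (((R:ℝ):ℂ) * ((Cs:ℂ) - (S:ℝ) * Complex.I))⁻¹
        = ((R:ℝ):ℂ)⁻¹ * ((Cs:ℂ) + (S:ℝ) * Complex.I) := by
      rw [mul_inv]
      congr 1
      exact inv_eq_of_mul_eq_one_left hunit
    rw [hinv1, hinv2] at hc1
    have hval : DeltaSeq^[K] y 0 = (-1:ℝ)^K * K.factorial * S / (q2 * τ * R) := by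
      have hq2' : ((q2:ℝ):ℂ) ≠ 0 := by rw [Complex.ofReal_ne_zero]; exact h2.ne'
      have hτ' : ((τ:ℝ):ℂ) ≠ 0 := by rw [Complex.ofReal_ne_zero]; exact hτ.ne'
      have hR' : ((R:ℝ):ℂ) ≠ 0 := by rw [Complex.ofReal_ne_zero]; exact hR.ne'
      have hτI : (-2 * ((τ:ℝ):ℂ) * Complex.I) ≠ 0 :=
        mul_ne_zero (mul_ne_zero (by norm_num) hτ') Complex.I_ne_zero
      have hcast : ((DeltaSeq^[K] y 0 : ℝ) : ℂ)
          = (((-1:ℝ)^K * K.factorial * S / (q2 * τ * R) : ℝ) : ℂ) := by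
        rw [hc1, hcdef]
        rw [show ((-1:ℂ)) ^ K * (K.factorial:ℂ) * (((R:ℝ):ℂ)⁻¹ * (((Cs:ℝ):ℂ) - ((S:ℝ):ℂ) * Complex.I))
            - ((-1:ℂ)) ^ K * (K.factorial:ℂ) * (((R:ℝ):ℂ)⁻¹ * (((Cs:ℝ):ℂ) + ((S:ℝ):ℂ) * Complex.I))
            = ((-1:ℂ)) ^ K * (K.factorial:ℂ) * (((R:ℝ):ℂ))⁻¹ * (-2 * ((S:ℝ):ℂ) * Complex.I) by ring]
        have e2 : (-2 * ((τ:ℝ):ℂ) * Complex.I)⁻¹ * (-2 * ((S:ℝ):ℂ) * Complex.I)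
            = ((S:ℝ):ℂ) * (((τ:ℝ):ℂ))⁻¹ := by
          rw [show (-2 * ((S:ℝ):ℂ) * Complex.I)
              = (-2 * ((τ:ℝ):ℂ) * Complex.I) * (((S:ℝ):ℂ) * (((τ:ℝ):ℂ))⁻¹) by
            field_simp]
          rw [inv_mul_cancel_left₀ hτI]
        rw [mul_inv]
        rw [show ((q2:ℂ))⁻¹ * (-2 * ((τ:ℝ):ℂ) * Complex.I)⁻¹
              * (((-1:ℂ)) ^ K * (K.factorial:ℂ) * (((R:ℝ):ℂ))⁻¹ * (-2 * ((S:ℝ):ℂ) * Complex.I))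
            = ((q2:ℂ))⁻¹ * (((-1:ℂ)) ^ K * (K.factorial:ℂ) * (((R:ℝ):ℂ))⁻¹)
              * ((-2 * ((τ:ℝ):ℂ) * Complex.I)⁻¹ * (-2 * ((S:ℝ):ℂ) * Complex.I)) by ring]
        rw [e2]
        push_cast
        rw [div_eq_mul_inv, mul_inv, mul_inv]
        ring
      exact_mod_cast hcast
    rw [hval] at h0
    have hsimp : (-1:ℝ)^K * ((-1:ℝ)^K * K.factorial * S / (q2 * τ * R))
        = (K.factorial : ℝ) * S / (q2 * τ * R) := by
      rw [show (-1:ℝ)^K * ((-1:ℝ)^K * (K.factorial : ℝ) * S / (q2 * τ * R))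
          = ((-1:ℝ)^K * (-1:ℝ)^K) * ((K.factorial:ℝ) * S / (q2 * τ * R)) by ring,
        ← mul_pow]
      norm_num
    rw [hsimp] at h0
    have hfac : (0:ℝ) < K.factorial := by exact_mod_cast K.factorial_pos
    have hden : (0:ℝ) < q2 * τ * R := by positivity
    have h3 : 0 ≤ (K.factorial : ℝ) * S := by
      have := mul_nonneg h0 hden.le
      rwa [div_mul_cancel₀ _ hden.ne'] at this
    nlinarith
  -- contradiction: the angles increase to infinity with steps < π/2
  have hpi := Real.pi_gt_three
  set M : ℕ := ⌈theta σ τ 0⌉₊ with hMdef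
  set B : ℝ := 2 * Real.pi * M + Real.pi with hBdef
  have hθ0 : theta σ τ 0 < B := by
    have h4 : theta σ τ 0 ≤ (M : ℝ) := Nat.le_ceil _
    have h5 : (M:ℝ) ≤ 2 * Real.pi * M := by nlinarith [(Nat.cast_nonneg M : (0:ℝ) ≤ (M:ℝ))]
    nlinarith [Real.pi_pos]
  have hex : ∃ K, B < theta σ τ K := ((theta_tendsto hσ hτ).eventually_gt_atTop B).exists
  set K0 : ℕ := Nat.find hex with hK0def
  have hfind : B < theta σ τ K0 := Nat.find_spec hex
  have hK0ne : K0 ≠ 0 := by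
    intro h0
    rw [h0] at hfind
    linarith
  obtain ⟨K1, hK1⟩ : ∃ K1, K0 = K1 + 1 := ⟨K0 - 1, by omega⟩
  have hprev : theta σ τ K1 ≤ B := by
    by_contra hlt
    push_neg at hlt
    exact Nat.find_min hex (by omega) hlt
  have hstep : theta σ τ K0 = theta σ τ K1 + Real.arctan (τ / (σ + ((K1+1:ℕ):ℝ))) := by
    rw [hK1]
    simp only [theta]
    rw [Finset.sum_range_succ]
  have harct : Real.arctan (τ / (σ + ((K1+1:ℕ):ℝ))) < Real.pi / 2 :=
    Real.arctan_lt_pi_div_two _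
  have hub : theta σ τ K0 < B + Real.pi / 2 := by
    rw [hstep]; linarith
  set u : ℝ := theta σ τ K0 - 2 * Real.pi * M with hudef
  have hu1 : Real.pi < u := by
    rw [hudef]
    rw [hBdef] at hfind
    linarith
  have hu2 : u < 2 * Real.pi := by
    rw [hudef]
    rw [hBdef] at hub
    linarith [Real.pi_pos]
  have hsinu : Real.sin (theta σ τ K0) = Real.sin u := by
    rw [show theta σ τ K0 = u + (M:ℝ) * (2 * Real.pi) by rw [hudef]; ring]
    exact Real.sin_add_nat_mul_two_pi u M
  have hneg : Real.sin u < 0 := by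
    have h6 : Real.sin (u - Real.pi) = -Real.sin u := Real.sin_sub_pi u
    have h7 : 0 < Real.sin (u - Real.pi) :=
      Real.sin_pos_of_pos_of_lt_pi (by linarith) (by linarith)
    linarith
  have := hsin K0
  rw [hsinu] at this
  linarith

end Aux

namespace Aux

/-- `Delta1` iterates reduce to `DeltaSeq` in the first variable. -/
lemma d1_to_seq (i : ℕ) : ∀ (F : ℕ → ℕ → ℝ) (m n : ℕ),
    Delta1^[i] F m n = DeltaSeq^[i] (fun m => F m n) m := by
  induction i with
  | zero => intro F m n; simp
  | succ i ih =>
    intro F m n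
    rw [Function.iterate_succ_apply, Function.iterate_succ_apply]
    rw [ih (Delta1 F) m n]
    apply ds_congr (f := fun m => Delta1 F m n) (g := DeltaSeq fun m => F m n)
    intro m
    simp [Delta1, DeltaSeq]

/-- `Delta2` iterates reduce to `DeltaSeq` in the second variable. -/
lemma d2_to_seq (j : ℕ) : ∀ (F : ℕ → ℕ → ℝ) (m n : ℕ),
    Delta2^[j] F m n = DeltaSeq^[j] (fun n => F m n) n := by
  induction j with
  | zero => intro F m n; simp
  | succ j ih =>
    intro F m n
    rw [Function.iterate_succ_apply, Function.iterate_succ_apply]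
    rw [ih (Delta2 F) m n]
    apply ds_congr (f := fun n => Delta2 F m n) (g := DeltaSeq fun n => F m n)
    intro n
    simp [Delta2, DeltaSeq]

/-- closed form for iterated differences of `n ↦ 1/(β+αn)`. -/
lemma ds_inv_linear_closed (α β : ℝ) (hp : ∀ n : ℕ, 0 < β + α * n) :
    ∀ (j n : ℕ), DeltaSeq^[j] (fun n : ℕ => 1/(β + α*(n:ℝ))) n
      = (-1)^j * (j.factorial : ℝ)
          * (α^j / ∏ l ∈ Finset.range (j+1), (β + α*((n+l:ℕ):ℝ))) := by
  intro j
  induction j with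
  | zero =>
    intro n
    simp only [Function.iterate_zero, id_eq, pow_zero, Nat.factorial_zero, Nat.cast_one]
    rw [Finset.prod_range_one, one_div, one_mul, one_mul, one_div]
    norm_num
  | succ j ih =>
    intro n
    rw [Function.iterate_succ_apply']
    have hne : ∀ n : ℕ, (β + α*(n:ℝ)) ≠ 0 := fun n => (hp n).ne'
    have hA : (∏ l ∈ Finset.range (j+1), (β + α*((n+l:ℕ):ℝ))) ≠ 0 :=
      Finset.prod_ne_zero_iff.2 fun l _ => hne (n+l)
    have hB : (∏ l ∈ Finset.range (j+1), (β + α*((n+1+l:ℕ):ℝ))) ≠ 0 :=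
      Finset.prod_ne_zero_iff.2 fun l _ => hne (n+1+l)
    have hF : (∏ l ∈ Finset.range (j+2), (β + α*((n+l:ℕ):ℝ))) ≠ 0 :=
      Finset.prod_ne_zero_iff.2 fun l _ => hne (n+l)
    have e1 : (∏ l ∈ Finset.range (j+2), (β + α*((n+l:ℕ):ℝ)))
        = (β + α*(n:ℝ)) * ∏ l ∈ Finset.range (j+1), (β + α*((n+1+l:ℕ):ℝ)) := by
      rw [Finset.prod_range_succ' (fun l => (β + α*((n+l:ℕ):ℝ))) (j+1), mul_comm]
      congr 1
      apply Finset.prod_congr rfl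
      intro l _
      have hnl : n + (l + 1) = n + 1 + l := by omega
      rw [hnl]
    have e2 : (∏ l ∈ Finset.range (j+2), (β + α*((n+l:ℕ):ℝ)))
        = (∏ l ∈ Finset.range (j+1), (β + α*((n+l:ℕ):ℝ))) * (β + α*((n+(j+1):ℕ):ℝ)) := by
      rw [Finset.prod_range_succ]
    have b1 : (∏ l ∈ Finset.range (j+1), (β + α*((n+1+l:ℕ):ℝ)))⁻¹
        = (β + α*(n:ℝ)) * (∏ l ∈ Finset.range (j+2), (β + α*((n+l:ℕ):ℝ)))⁻¹ := by
      rw [e1, mul_inv, ← mul_assoc, mul_inv_cancel₀ (hne n), one_mul]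
    have a1 : (∏ l ∈ Finset.range (j+1), (β + α*((n+l:ℕ):ℝ)))⁻¹
        = (β + α*((n+(j+1):ℕ):ℝ)) * (∏ l ∈ Finset.range (j+2), (β + α*((n+l:ℕ):ℝ)))⁻¹ := by
      rw [e2, mul_inv, mul_comm ((∏ l ∈ Finset.range (j+1), (β + α*((n+l:ℕ):ℝ)))⁻¹) _,
        ← mul_assoc, mul_inv_cancel₀ (hne (n+(j+1))), one_mul]
    simp only [DeltaSeq]
    rw [ih n, ih (n+1)]
    have hcongr : (∏ l ∈ Finset.range (j+1), (β + α*(((n+1)+l:ℕ):ℝ)))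
        = ∏ l ∈ Finset.range (j+1), (β + α*((n+1+l:ℕ):ℝ)) := rfl
    rw [hcongr, div_eq_mul_inv, div_eq_mul_inv, div_eq_mul_inv, b1, a1]
    push_cast [Nat.factorial_succ]
    ring

/-- real-rooted factorization of the section quadratics. -/
lemma roots_exist (a0 a1 b0 b1 b2 c : ℝ) (hb0 : 0 < b0) (hb1 : 0 < b1) (hb2 : 0 < b2)
    (ha0 : 0 < a0) (ha1 : 0 < a1) (hc : 0 ≤ c) (he : (b1 - a1) * (b2 - a1) ≤ 0) :
    ∃ r1 r2 : ℝ, 0 < r1 ∧ r1 ≤ a1 ∧ 0 < r2 ∧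
      ∀ x : ℝ, b0*(x+b1)*(x+b2) + a0*(x+a1)*c = b0*(x+r1)*(x+r2) := by
  set D : ℝ := b0*(b1+b2) + a0*c with hDdef
  set Q : ℝ := b0*b1*b2 + a0*a1*c with hQdef
  have hD : 0 < D := by rw [hDdef]; positivity
  have hQ : 0 < Q := by rw [hQdef]; positivity
  have hΔ : 0 ≤ D^2 - 4*b0*Q := by
    nlinarith [sq_nonneg (a0*c + b0*(b1+b2-2*a1)),
      mul_nonneg (mul_pos hb0 hb0).le (neg_nonneg.2 he)]
  set d : ℝ := Real.sqrt (D^2 - 4*b0*Q) with hddef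
  have hd2 : d^2 = D^2 - 4*b0*Q := Real.sq_sqrt hΔ
  have hdnn : 0 ≤ d := Real.sqrt_nonneg _
  have hdD : d < D := by nlinarith [hd2, mul_pos hb0 hQ, hdnn, hD]
  have hdlb : D - 2*a1*b0 ≤ d := by
    have hkey2 : D^2 - 4*b0*Q - (D - 2*a1*b0)^2 = -4*(b0*b0)*((b1-a1)*(b2-a1)) := by
      rw [hDdef, hQdef]; ring
    have hsq : (D - 2*a1*b0)^2 ≤ D^2 - 4*b0*Q := by
      nlinarith [hkey2, mul_nonneg (mul_pos hb0 hb0).le (neg_nonneg.2 he)]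
    calc D - 2*a1*b0 ≤ |D - 2*a1*b0| := le_abs_self _
      _ = Real.sqrt ((D - 2*a1*b0)^2) := (Real.sqrt_sq_eq_abs _).symm
      _ ≤ d := Real.sqrt_le_sqrt hsq
  refine ⟨(D - d)/(2*b0), (D + d)/(2*b0), div_pos (by linarith) (by positivity), ?_,
    div_pos (by linarith) (by positivity), ?_⟩
  · rw [div_le_iff₀ (by positivity)]
    linarith
  · intro x
    have key : 4*b0*(b0*(x+b1)*(x+b2) + a0*(x+a1)*c)
        = ((2*b0*x + D) - d)*((2*b0*x + D) + d) := by
      have expand : ((2*b0*x + D) - d)*((2*b0*x + D) + d) = (2*b0*x + D)^2 - d^2 := by ring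
      rw [expand, hd2, hDdef, hQdef]
      ring
    have key2 : 4*b0*(b0*(x+(D - d)/(2*b0))*(x+(D + d)/(2*b0)))
        = ((2*b0*x + D) - d)*((2*b0*x + D) + d) := by
      field_simp
      ring
    have h4 : (4*b0) ≠ 0 := by positivity
    apply mul_left_cancel₀ h4
    rw [key, key2]

end Aux

namespace Aux

/-- complete monotonicity of the `z`-sequences. -/
lemma cm_z (a0 a1 b0 b1 b2 : ℝ) (hb0 : 0 < b0) (hb1 : 0 < b1) (hb2 : 0 < b2)
    (ha0 : 0 < a0) (ha1 : 0 < a1) (he : (b1 - a1) * (b2 - a1) ≤ 0) (j n : ℕ) :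
    CM (fun m : ℕ => (a0*((m:ℝ)+a1))^j
      / ∏ l ∈ Finset.range (j+1),
          (b0*((m:ℝ)+b1)*((m:ℝ)+b2) + a0*((m:ℝ)+a1)*((n+l:ℕ):ℝ))) := by
  have base : ∀ c : ℝ, 0 ≤ c →
      CM (fun m : ℕ => 1/(b0*((m:ℝ)+b1)*((m:ℝ)+b2) + a0*((m:ℝ)+a1)*c)) := by
    intro c hc
    obtain ⟨r1, r2, hr1, hr1a, hr2, hfac⟩ :=
      roots_exist a0 a1 b0 b1 b2 c hb0 hb1 hb2 ha0 ha1 hc he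
    apply CM.congr (f := fun m : ℕ => (1/b0) * (((m:ℝ)+r1)⁻¹ * ((m:ℝ)+r2)⁻¹))
    · intro m
      rw [hfac (m:ℝ)]
      have h1 : ((m:ℝ)+r1) ≠ 0 := by positivity
      have h2 : ((m:ℝ)+r2) ≠ 0 := by positivity
      have h3 : b0 ≠ 0 := hb0.ne'
      field_simp
    · exact CM.cmul (by positivity) (CM.mul (CM.inv_linear hr1) (CM.inv_linear hr2))
  have ratio : ∀ c : ℝ, 0 ≤ c →
      CM (fun m : ℕ => a0*((m:ℝ)+a1) / (b0*((m:ℝ)+b1)*((m:ℝ)+b2) + a0*((m:ℝ)+a1)*c)) := by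
    intro c hc
    obtain ⟨r1, r2, hr1, hr1a, hr2, hfac⟩ :=
      roots_exist a0 a1 b0 b1 b2 c hb0 hb1 hb2 ha0 ha1 hc he
    apply CM.congr (f := fun m : ℕ =>
      (a0/b0) * (((m:ℝ)+r2)⁻¹ + (a1 - r1) * (((m:ℝ)+r1)⁻¹ * ((m:ℝ)+r2)⁻¹)))
    · intro m
      rw [hfac (m:ℝ)]
      have h1 : ((m:ℝ)+r1) ≠ 0 := by positivity
      have h2 : ((m:ℝ)+r2) ≠ 0 := by positivity
      have h3 : b0 ≠ 0 := hb0.ne'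
      field_simp
      ring
    · exact CM.cmul (by positivity)
        (CM.add (CM.inv_linear hr2) (CM.cmul (by linarith)
          (CM.mul (CM.inv_linear hr1) (CM.inv_linear hr2))))
  induction j with
  | zero =>
    apply CM.congr (f := fun m : ℕ => 1/(b0*((m:ℝ)+b1)*((m:ℝ)+b2) + a0*((m:ℝ)+a1)*((n:ℕ):ℝ)))
    · intro m
      rw [pow_zero, Finset.prod_range_one]
      norm_num
    · exact base ((n:ℕ):ℝ) (Nat.cast_nonneg n)
  | succ j ih =>
    apply CM.congr (f := fun m : ℕ =>
      ((a0*((m:ℝ)+a1))^j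
        / ∏ l ∈ Finset.range (j+1),
            (b0*((m:ℝ)+b1)*((m:ℝ)+b2) + a0*((m:ℝ)+a1)*((n+l:ℕ):ℝ)))
      * (a0*((m:ℝ)+a1) / (b0*((m:ℝ)+b1)*((m:ℝ)+b2) + a0*((m:ℝ)+a1)*((n+(j+1):ℕ):ℝ))))
    · intro m
      rw [Finset.prod_range_succ
          (fun l => (b0*((m:ℝ)+b1)*((m:ℝ)+b2) + a0*((m:ℝ)+a1)*((n+l:ℕ):ℝ))) (j+1),
        div_mul_div_comm, ← pow_succ]
    · exact CM.mul ih (ratio ((n+(j+1):ℕ):ℝ) (Nat.cast_nonneg _))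

end Aux

set_option maxHeartbeats 1000000

/-- Nailwal, NYJ, Theorem 2.1: for
`p(x,y) = b₀(x+b₁)(x+b₂) + a₀(x+a₁)y` positive on `ℝ₊²`, with `a₀a₁ ≠ 0` and `b₁ ≤ b₂`,
the net `(m,n) ↦ 1/p(m,n)` is joint completely monotone iff `b₁ ≤ a₁ ≤ b₂`. -/
theorem degree_two_one_characterization
    (a0 a1 b0 b1 b2 : ℝ) (ha : a0 * a1 ≠ 0) (hb : b1 ≤ b2)
    (hpos : ∀ x y : ℝ, 0 ≤ x → 0 ≤ y →
      0 < b0 * (x + b1) * (x + b2) + a0 * (x + a1) * y) :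
    JointCM (fun m n : ℕ =>
        1 / (b0 * ((m : ℝ) + b1) * ((m : ℝ) + b2) + a0 * ((m : ℝ) + a1) * n)) ↔
      b1 ≤ a1 ∧ a1 ≤ b2 := by
  -- positivity of the parameters
  have hp00 : 0 < b0*b1*b2 := by
    have h := hpos 0 0 le_rfl le_rfl
    nlinarith [h]
  have hb0 : 0 < b0 := by
    by_contra hb0n
    push_neg at hb0n
    have hx0 : (0:ℝ) ≤ max (max (1-b1) (1-b2)) 0 := le_max_right _ _
    have hxb1 : 1 ≤ max (max (1-b1) (1-b2)) 0 + b1 := by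
      have h1 : (1-b1) ≤ max (max (1-b1) (1-b2)) 0 :=
        le_trans (le_max_left _ _) (le_max_left _ _)
      linarith
    have hxb2 : 1 ≤ max (max (1-b1) (1-b2)) 0 + b2 := by
      have h1 : (1-b2) ≤ max (max (1-b1) (1-b2)) 0 :=
        le_trans (le_max_right _ _) (le_max_left _ _)
      linarith
    have h := hpos (max (max (1-b1) (1-b2)) 0) 0 hx0 le_rfl
    have huv : (1:ℝ) ≤ (max (max (1-b1) (1-b2)) 0 + b1) * (max (max (1-b1) (1-b2)) 0 + b2) := by
      nlinarith [hxb1, hxb2]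
    nlinarith [h, huv, hb0n]
  have hb1b2 : 0 < b1*b2 := by
    by_contra h
    push_neg at h
    nlinarith [hp00, hb0]
  have hb1 : 0 < b1 := by
    by_contra hb1n
    push_neg at hb1n
    have hb2n : b2 < 0 := by nlinarith [hb1b2]
    have h := hpos (-b1) 0 (by linarith) le_rfl
    nlinarith [h]
  have hb2 : 0 < b2 := lt_of_lt_of_le hb1 hb
  have ha0a1 : 0 < a0*a1 := by
    by_contra han
    push_neg at han
    have hlt : a0*a1 < 0 := lt_of_le_of_ne han ha
    have hA : (0:ℝ) < -(a0*a1) := by linarith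
    have h := hpos 0 ((b0*b1*b2+1)/(-(a0*a1))) le_rfl
      (le_of_lt (div_pos (by nlinarith [hp00]) hA))
    have heq : a0*(0+a1)*((b0*b1*b2+1)/(-(a0*a1))) = -(b0*b1*b2+1) := by
      field_simp
      rw [zero_add, div_self ha]
    nlinarith [h, heq]
  have ha0 : 0 < a0 := by
    by_contra ha0n
    push_neg at ha0n
    have ha0ne : a0 ≠ 0 := by
      intro h0
      rw [h0, zero_mul] at ha0a1
      exact lt_irrefl 0 ha0a1
    have ha0lt : a0 < 0 := lt_of_le_of_ne ha0n ha0ne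
    have ha1lt : a1 < 0 := by nlinarith [ha0a1]
    have hx0 : (0:ℝ) ≤ 1-a1 := by linarith
    have hQ' : 0 < b0*((1-a1)+b1)*((1-a1)+b2) := by
      have h := hpos (1-a1) 0 hx0 le_rfl
      nlinarith [h]
    have hy : (0:ℝ) ≤ (b0*((1-a1)+b1)*((1-a1)+b2)+1)/(-a0) :=
      le_of_lt (div_pos (by linarith) (by linarith))
    have h := hpos (1-a1) ((b0*((1-a1)+b1)*((1-a1)+b2)+1)/(-a0)) hx0 hy
    have heq : a0*((1-a1)+a1)*((b0*((1-a1)+b1)*((1-a1)+b2)+1)/(-a0))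
        = -(b0*((1-a1)+b1)*((1-a1)+b2)+1) := by
      have : a0 ≠ 0 := ha0ne
      field_simp
      ring
    nlinarith [h, heq]
  have ha1 : 0 < a1 := by nlinarith [ha0a1, ha0]
  constructor
  · -- necessity
    intro hJCM
    have hE : (b1 - a1) * (b2 - a1) ≤ 0 := by
      by_contra hEn
      push_neg at hEn
      set E : ℝ := (b1 - a1) * (b2 - a1) with hEdef
      set C1 : ℝ := (a1*b0*(b1+b2) - 2*b0*b1*b2)/(a0*a1) with hC1def
      set C2 : ℝ := (a0^2*a1^4/(4*b0*E) - b0*b1*b2)/(a0*a1) with hC2def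
      set n0 : ℕ := ⌈max C1 C2⌉₊ with hn0def
      have hn0a : C1 ≤ (n0:ℝ) := le_trans (le_max_left _ _) (Nat.le_ceil _)
      have hn0b : C2 ≤ (n0:ℝ) := le_trans (le_max_right _ _) (Nat.le_ceil _)
      set G : ℝ := b0*(b1+b2) + a0*(n0:ℝ) with hGdef
      set H : ℝ := b0*b1*b2 + a0*a1*(n0:ℝ) with hHdef
      have hH : 0 < H := by rw [hHdef]; positivity
      have hcen : 0 ≤ 2*H - a1*G := by
        have h1 := (div_le_iff₀ (by positivity : (0:ℝ) < a0*a1)).1 hn0a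
        rw [hGdef, hHdef]
        linarith [h1]
      have hWge : a0^2*a1^4 ≤ 4*b0*E*H := by
        have h1 := (div_le_iff₀ (by positivity : (0:ℝ) < a0*a1)).1 hn0b
        have h2 : a0^2*a1^4/(4*b0*E) ≤ H := by
          rw [hHdef]
          linarith [h1]
        have h3 : (0:ℝ) < 4*b0*E := by positivity
        calc a0^2*a1^4 = (a0^2*a1^4/(4*b0*E)) * (4*b0*E) := by field_simp
          _ ≤ H * (4*b0*E) := mul_le_mul_of_nonneg_right h2 h3.le
          _ = 4*b0*E*H := by ring
      have hsr : 0 ≤ (2*H - a1*G)/(a0*a1^2) := div_nonneg hcen (by positivity)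
      set s : ℕ := ⌊(2*H - a1*G)/(a0*a1^2)⌋₊ with hsdef
      have hs1 : (s:ℝ) ≤ (2*H - a1*G)/(a0*a1^2) := Nat.floor_le hsr
      have hs2 : (2*H - a1*G)/(a0*a1^2) < (s:ℝ) + 1 := Nat.lt_floor_add_one _
      set q2 : ℝ := b0 + a0*(s:ℝ) with hq2def
      set q1 : ℝ := b0*(b1+b2) + a0*(n0:ℝ) + a0*a1*(s:ℝ) with hq1def
      have hq2 : 0 < q2 := by rw [hq2def]; positivity
      have hq1 : 0 < q1 := by rw [hq1def]; positivity
      have hdisc : q1^2 < 4*q2*H := by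
        have h5 : a0*a1^2*(s:ℝ) - (2*H - a1*G) ≤ 0 := by
          have := (le_div_iff₀ (by positivity : (0:ℝ) < a0*a1^2)).1 hs1
          linarith [this]
        have h6 : -(a0*a1^2) < a0*a1^2*(s:ℝ) - (2*H - a1*G) := by
          have := (div_lt_iff₀ (by positivity : (0:ℝ) < a0*a1^2)).1 hs2
          linarith [this]
        have hA2 : (0:ℝ) < a0*a1^2 := by positivity
        have hbd : (a0*a1^2*(s:ℝ) - (2*H - a1*G))^2 < a0^2*a1^4 := by
          nlinarith [h5, h6, hA2]
        have hid : a1^2*(q1^2 - 4*q2*H)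
            = (a0*a1^2*(s:ℝ) - (2*H - a1*G))^2 - 4*H*b0*E := by
          rw [hq1def, hq2def, hGdef, hHdef, hEdef]
          ring
        have h7 : a1^2*(q1^2 - 4*q2*H) < 0 := by
          rw [hid]
          nlinarith [hbd, hWge]
        nlinarith [h7, mul_pos ha1 ha1]
      have hdiag := Aux.diag_cm hJCM s n0
      have hcm2 : CM (fun k : ℕ => (q2*(k:ℝ)^2 + q1*(k:ℝ) + H)⁻¹) := by
        apply Aux.CM.congr (hf := hdiag)
        intro k
        show 1 / (b0*((k:ℝ)+b1)*((k:ℝ)+b2) + a0*((k:ℝ)+a1)*((n0+s*k : ℕ):ℝ))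
            = (q2*(k:ℝ)^2 + q1*(k:ℝ) + H)⁻¹
        rw [one_div]
        congr 1
        rw [hq2def, hq1def, hHdef]
        push_cast
        ring
      exact Aux.not_cm_inv_quadratic q2 q1 H hq2 hq1 hdisc hcm2
    constructor
    · nlinarith [hE, hb]
    · nlinarith [hE, hb]
  · -- sufficiency
    rintro ⟨hba, hab⟩
    have he : (b1 - a1) * (b2 - a1) ≤ 0 :=
      mul_nonpos_iff.2 (Or.inr ⟨by linarith, by linarith⟩)
    intro i j m n
    rw [Aux.d1_to_seq]
    have h1 : ∀ m' : ℕ,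
        Delta2^[j] (fun m n : ℕ =>
          1 / (b0 * ((m : ℝ) + b1) * ((m : ℝ) + b2) + a0 * ((m : ℝ) + a1) * n)) m' n
        = ((-1:ℝ)^j * (j.factorial:ℝ))
            * ((a0*((m':ℝ)+a1))^j
              / ∏ l ∈ Finset.range (j+1),
                  (b0*((m':ℝ)+b1)*((m':ℝ)+b2) + a0*((m':ℝ)+a1)*((n+l:ℕ):ℝ))) := by
      intro m'
      rw [Aux.d2_to_seq]
      have hp' : ∀ nn : ℕ, 0 < b0*((m':ℝ)+b1)*((m':ℝ)+b2) + (a0*((m':ℝ)+a1)) * (nn:ℝ) := by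
        intro nn
        have := hpos (m':ℝ) (nn:ℝ) (Nat.cast_nonneg m') (Nat.cast_nonneg nn)
        nlinarith [this]
      have := Aux.ds_inv_linear_closed (a0*((m':ℝ)+a1)) (b0*((m':ℝ)+b1)*((m':ℝ)+b2)) hp' j n
      rw [Aux.ds_congr (g := fun nn : ℕ =>
        1/(b0*((m':ℝ)+b1)*((m':ℝ)+b2) + (a0*((m':ℝ)+a1)) * (nn:ℝ)))
        (fun nn => by ring_nf) j n]
      rw [this]
    rw [Aux.ds_congr h1 i m, Aux.iter_cmul]
    have hz := Aux.cm_z a0 a1 b0 b1 b2 hb0 hb1 hb2 ha0 ha1 he j n i m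
    have hpow : (-1:ℝ)^(i+j) * (-1:ℝ)^j = (-1:ℝ)^i := by
      rw [← pow_add, show i+j+j = i + 2*j by ring, pow_add, pow_mul]
      norm_num
    have e : (-1:ℝ)^(i+j) * (((-1:ℝ)^j * (j.factorial:ℝ))
          * DeltaSeq^[i] (fun m' : ℕ => (a0*((m':ℝ)+a1))^j
              / ∏ l ∈ Finset.range (j+1),
                  (b0*((m':ℝ)+b1)*((m':ℝ)+b2) + a0*((m':ℝ)+a1)*((n+l:ℕ):ℝ))) m)
        = (j.factorial:ℝ) * ((-1:ℝ)^i
          * DeltaSeq^[i] (fun m' : ℕ => (a0*((m':ℝ)+a1))^j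
              / ∏ l ∈ Finset.range (j+1),
                  (b0*((m':ℝ)+b1)*((m':ℝ)+b2) + a0*((m':ℝ)+a1)*((n+l:ℕ):ℝ))) m) := by
      rw [show (-1:ℝ)^(i+j) * (((-1:ℝ)^j * (j.factorial:ℝ)) * DeltaSeq^[i] _ m)
          = ((-1:ℝ)^(i+j) * (-1:ℝ)^j) * ((j.factorial:ℝ) * DeltaSeq^[i] _ m) from by ring,
        hpow]
      ring
    rw [e]
    exact mul_nonneg (Nat.cast_nonneg _) hz
end

section
/- Let b_1, b_2, b_3 be positive real numbers and let p(x,y) = (x + b_1)(x + b_2)(x + b_3) + (x + 1)·y (i.e., b_0 = a_0 = a_1 = 1). Set t_1 = b_1 b_2 b_3 and t_2 = (1 + b_1)(1 + b_2)(1 + b_3). If (t_2 + 3)²/(1/√2)² − (t_1 + 3/2)²/(1/2)² < 1 (equivalently, t_2² − 2t_1² + 6t_2 − 6t_1 + 4 < 0), then the net (m,n) ↦ 1/p(m,n), (m,n) ∈ ℤ₊², is not joint completely monotone; indeed Δ_1Δ_2 β(0,1) < 0 for β(m,n) = 1/p(m,n). -/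
open MeasureTheory Filter

/-! For fixed `m`, `1/p(m,n)` is the reciprocal of an affine function of `n`, so its `n`-difference
is explicit. As `p(0,n) = t₁ + n` and `p(1,n) = t₂ + 2n`, this gives
`Δ₁Δ₂β(0,1) = 1/((t₁+1)(t₁+2)) - 2/((t₂+2)(t₂+4))`, and the hyperbola condition is exactly
`(t₂+2)(t₂+4) < 2(t₁+1)(t₁+2)`. A negative `Δ₁Δ₂` violates joint complete monotonicity at
`i = j = 1`. -/

theorem not_jointCM_of_delta1_delta2_neg {x : ℕ → ℕ → ℝ} {m n : ℕ}
    (h : Delta1 (Delta2 x) m n < 0) : ¬ JointCM x := fun hx => by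
  have := hx 1 1 m n
  norm_num at this
  linarith

theorem delta2_one_div_affine {c d : ℕ → ℝ} (hc : ∀ m, 0 < c m) (hd : ∀ m, 0 ≤ d m) (m n : ℕ) :
    Delta2 (fun m n => 1 / (c m + d m * n)) m n =
      -(d m / ((c m + d m * n) * (c m + d m * (n + 1)))) := by
  have h₀ : 0 < c m + d m * n := by have := hc m; have := hd m; positivity
  have h₁ : 0 < c m + d m * (n + 1) := by have := hc m; have := hd m; positivity
  simp only [Delta2, Nat.cast_add, Nat.cast_one]
  field_simp
  ring

theorem add_two_mul_add_four_lt_of_hyperbola {t₁ t₂ : ℝ}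
    (h : (t₂ + 3) ^ 2 / (1 / Real.sqrt 2) ^ 2 - (t₁ + 3 / 2) ^ 2 / (1 / 2 : ℝ) ^ 2 < 1) :
    (t₂ + 2) * (t₂ + 4) < 2 * ((t₁ + 1) * (t₁ + 2)) := by
  rw [div_pow, Real.sq_sqrt zero_le_two] at h
  norm_num at h
  nlinarith

/-- Example 4.6: for `p(x,y) = (x+b₁)(x+b₂)(x+b₃) + (x+1)y`,
if `(t₂+3)²/(1/√2)² − (t₁+3/2)²/(1/2)² < 1` where `t₁ = b₁b₂b₃` and
`t₂ = (1+b₁)(1+b₂)(1+b₃)`, then `Δ₁Δ₂β(0,1) < 0` and the net `1/p(m,n)` is not joint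
completely monotone. -/
theorem not_jointCM_example
    (b1 b2 b3 : ℝ) (hb1 : 0 < b1) (hb2 : 0 < b2) (hb3 : 0 < b3)
    (hcond : ((1 + b1) * (1 + b2) * (1 + b3) + 3) ^ 2 / (1 / Real.sqrt 2) ^ 2 -
        (b1 * b2 * b3 + 3 / 2) ^ 2 / ((1 / 2 : ℝ)) ^ 2 < 1) :
    Delta1 (Delta2 (fun m n : ℕ =>
        1 / (((m : ℝ) + b1) * ((m : ℝ) + b2) * ((m : ℝ) + b3) + ((m : ℝ) + 1) * n))) 0 1 < 0 ∧
    ¬ JointCM (fun m n : ℕ =>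
        1 / (((m : ℝ) + b1) * ((m : ℝ) + b2) * ((m : ℝ) + b3) + ((m : ℝ) + 1) * n)) := by
  set β : ℕ → ℕ → ℝ := fun m n =>
    1 / (((m : ℝ) + b1) * ((m : ℝ) + b2) * ((m : ℝ) + b3) + ((m : ℝ) + 1) * n)
  set t₁ := b1 * b2 * b3
  set t₂ := (1 + b1) * (1 + b2) * (1 + b3)
  have hdelta2 := delta2_one_div_affine
    (c := fun m : ℕ => ((m : ℝ) + b1) * ((m : ℝ) + b2) * ((m : ℝ) + b3))
    (d := fun m : ℕ => (m : ℝ) + 1) (fun m => by positivity) (fun m => by positivity)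
  have hβ : Delta1 (Delta2 β) 0 1 = 1 / ((t₁ + 1) * (t₁ + 2)) - 2 / ((t₂ + 2) * (t₂ + 4)) := by
    simp only [Delta1, β, hdelta2]
    norm_num
    ring
  have hneg : Delta1 (Delta2 β) 0 1 < 0 := by
    have hlt := add_two_mul_add_four_lt_of_hyperbola hcond
    rw [hβ, sub_neg, div_lt_div_iff₀ (by positivity) (by positivity)]
    linarith
  exact ⟨hneg, not_jointCM_of_delta1_delta2_neg hneg⟩
end

section
/- Let b > 0 and let p(x,y) = (x + b)(x + 2b)(x + 3b) + (x + 1)·y. If −36b⁶ + 132b⁵ + 193b⁴ + 144b³ + 124b² + 48b + 11 < 0, then the net (m,n) ↦ 1/p(m,n), (m,n) ∈ ℤ₊², is not joint completely monotone. -/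
open MeasureTheory Filter

/-- for `p(x,y) = (x+b)(x+2b)(x+3b) + (x+1)y` with `b > 0`, if
`−36b⁶ + 132b⁵ + 193b⁴ + 144b³ + 124b² + 48b + 11 < 0`, then the net `(m,n) ↦ 1/p(m,n)`
is not joint completely monotone. -/
theorem not_jointCM_family_one
    (b : ℝ) (hb : 0 < b)
    (hcond : -36 * b ^ 6 + 132 * b ^ 5 + 193 * b ^ 4 + 144 * b ^ 3 +
        124 * b ^ 2 + 48 * b + 11 < 0) :
    ¬ JointCM (fun m n : ℕ =>
        1 / (((m : ℝ) + b) * ((m : ℝ) + 2 * b) * ((m : ℝ) + 3 * b) + ((m : ℝ) + 1) * n)) := by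
  intro h
  have key := h 1 1 0 0
  simp only [Function.iterate_one, Delta1, Delta2] at key
  norm_num at key
  have hA : (0:ℝ) < (1 + b) * (1 + 2 * b) * (1 + 3 * b) := by positivity
  have hA2 : (0:ℝ) < (1 + b) * (1 + 2 * b) * (1 + 3 * b) + 2 := by linarith
  have hB : (0:ℝ) < b * (2 * b) * (3 * b) := by positivity
  have hB1 : (0:ℝ) < b * (2 * b) * (3 * b) + 1 := by linarith
  have hbne : b ≠ 0 := ne_of_gt hb
  field_simp at key
  nlinarith [key, mul_pos hb hb, mul_pos (mul_pos hb hb) hb]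
end

section
/- Let b > 0 and let p(x,y) = (x + b)³ + (x + 1)·y. If −b⁶ + 6b⁵ + 15b⁴ + 20b³ + 33b² + 24b + 11 < 0, then the net (m,n) ↦ 1/p(m,n), (m,n) ∈ ℤ₊², is not joint completely monotone. -/
open MeasureTheory Filter

/-- for `p(x,y) = (x+b)³ + (x+1)y` with `b > 0`, if
`−b⁶ + 6b⁵ + 15b⁴ + 20b³ + 33b² + 24b + 11 < 0`, then the net `(m,n) ↦ 1/p(m,n)`
is not joint completely monotone. -/
theorem not_jointCM_family_two
    (b : ℝ) (hb : 0 < b)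
    (hcond : -b ^ 6 + 6 * b ^ 5 + 15 * b ^ 4 + 20 * b ^ 3 +
        33 * b ^ 2 + 24 * b + 11 < 0) :
    ¬ JointCM (fun m n : ℕ =>
        1 / (((m : ℝ) + b) ^ 3 + ((m : ℝ) + 1) * n)) := by
  intro h
  have H := h 1 1 0 0
  simp only [Function.iterate_one, Delta1, Delta2] at H
  push_cast at H
  norm_num at H
  have h1 : (0:ℝ) < b ^ 3 := by positivity
  have h2 : (0:ℝ) < b ^ 3 + 1 := by positivity
  have h3 : (0:ℝ) < (1 + b) ^ 3 := by positivity
  have h4 : (0:ℝ) < (1 + b) ^ 3 + 2 := by positivity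
  rw [inv_le_iff_one_le_mul₀ h2] at H
  have key : ((1 + b) ^ 3 + 2)⁻¹ - ((1 + b) ^ 3)⁻¹ + (b ^ 3)⁻¹ =
      (((1+b)^3*(b^3) - ((1+b)^3+2)*(b^3) + ((1+b)^3+2)*((1+b)^3)) /
        (((1+b)^3+2)*((1+b)^3)*(b^3))) := by
    field_simp
  rw [key] at H
  rw [div_mul_eq_mul_div, le_div_iff₀ (by positivity)] at H
  nlinarith [H, sq_nonneg b, mul_pos h1 h2, mul_pos h3 h4]
end

section
/- The net (m,n) ↦ 1/((m + 1)(m + 3) + (m + 2)·n), (m,n) ∈ ℤ₊², is joint completely monotone, even though with b_1 = 1, b_2 = 3, a_1 = 2 neither b_1·b_2 ≤ a_1 nor b_1 + b_2 ≤ a_1 holds (showing that the necessary conditions ∏ b_j ≤ ∏ a_j and ∑ b_j ≤ ∑ a_j for the case deg a = deg b fail to be necessary when deg b = deg a + 1). -/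
open MeasureTheory Filter

/-!
Since `(m + 1)(m + 3) + (m + 2)n = (m + 2)(m + n + 2) - 1`, the net is the geometric series
`∑ₖ (m + 2)^{-(k+1)} (m + n + 2)^{-(k+1)}`. Each term has the form `u m * w (m + n)` with `u`, `w`
completely monotone, and such a product is joint completely monotone: its `j`-th difference in `n`
is `u m` times a completely monotone sequence in `m` (up to the sign `(-1)^j`), and completely
monotone sequences are closed under products by the product rule
`-Δ(f g) = f(· + 1) · (-Δ g) + (-Δ f) · g`. Joint complete monotonicity passes to convergent sums.
-/

open fwdDiff

lemma deltaSeq_eq_fwdDiff : DeltaSeq = Δ_[1] := rfl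

lemma iterate_deltaSeq_neg (x : ℕ → ℝ) (i : ℕ) : DeltaSeq^[i] (-x) = -DeltaSeq^[i] x := by
  simpa [deltaSeq_eq_fwdDiff] using fwdDiff_iter_const_smul (h := 1) (-1 : ℝ) x i

lemma iterate_deltaSeq_const_mul (c : ℝ) (x : ℕ → ℝ) (i m : ℕ) :
    DeltaSeq^[i] (fun m => c * x m) m = c * DeltaSeq^[i] x m :=
  congrFun (fwdDiff_iter_const_smul (h := 1) c x i) m

lemma iterate_deltaSeq_comp_add (x : ℕ → ℝ) (c i m : ℕ) :
    DeltaSeq^[i] (fun m => x (m + c)) m = DeltaSeq^[i] x (m + c) :=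
  fwdDiff_iter_comp_add 1 x c i m

lemma hasSum_iterate_deltaSeq {ι : Type*} {f : ι → ℕ → ℝ} {g : ℕ → ℝ}
    (h : ∀ n, HasSum (fun k => f k n) (g n)) (j n : ℕ) :
    HasSum (fun k => DeltaSeq^[j] (f k) n) (DeltaSeq^[j] g n) := by
  induction j generalizing f g with
  | zero => exact h n
  | succ j ih => exact ih fun n => (h (n + 1)).sub (h n)

/-- Complete monotonicity up to order `k`. The grading makes `1/(m + c)` accessible by
induction, since `-Δ (1/(m + c)) = 1/(m + c) · 1/(m + c + 1)` reduces order `k + 1` to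
products at order `k`. -/
def CMUpTo (k : ℕ) (x : ℕ → ℝ) : Prop :=
  ∀ i ≤ k, ∀ m, 0 ≤ (-1 : ℝ) ^ i * (DeltaSeq^[i] x) m

namespace CMUpTo

variable {k : ℕ} {f g x : ℕ → ℝ}

lemma zero_iff : CMUpTo 0 x ↔ ∀ m, 0 ≤ x m := by
  simp [CMUpTo]

lemma succ_iff : CMUpTo (k + 1) x ↔ (∀ m, 0 ≤ x m) ∧ CMUpTo k (-DeltaSeq x) := by
  have shift (i m : ℕ) : (-1 : ℝ) ^ (i + 1) * (DeltaSeq^[i + 1] x) m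
      = (-1) ^ i * (DeltaSeq^[i] (-DeltaSeq x)) m := by
    rw [iterate_deltaSeq_neg, Function.iterate_succ_apply]
    simp only [Pi.neg_apply, pow_succ]
    ring
  constructor
  · intro h
    refine ⟨fun m => by simpa using h 0 (Nat.zero_le _) m, fun i hi m => ?_⟩
    rw [← shift]
    exact h (i + 1) (by omega) m
  · rintro ⟨h0, h⟩ (_ | i) hi m
    · simpa using h0 m
    · rw [shift]
      exact h i (by omega) m

lemma mono (hx : CMUpTo (k + 1) x) : CMUpTo k x :=
  fun i hi => hx i (by omega)

lemma add (hf : CMUpTo k f) (hg : CMUpTo k g) : CMUpTo k (f + g) := by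
  intro i hi m
  rw [deltaSeq_eq_fwdDiff, fwdDiff_iter_add, Pi.add_apply, mul_add]
  exact add_nonneg (hf i hi m) (hg i hi m)

lemma comp_add (hx : CMUpTo k x) (c : ℕ) : CMUpTo k fun m => x (m + c) := by
  intro i hi m
  rw [iterate_deltaSeq_comp_add]
  exact hx i hi (m + c)

lemma mul (hf : CMUpTo k f) (hg : CMUpTo k g) : CMUpTo k (f * g) := by
  induction k generalizing f g with
  | zero =>
    rw [zero_iff] at *
    exact fun m => mul_nonneg (hf m) (hg m)
  | succ k ih =>
    obtain ⟨hf0, hf'⟩ := succ_iff.mp hf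
    obtain ⟨hg0, hg'⟩ := succ_iff.mp hg
    have product_rule :
        -DeltaSeq (f * g) = (fun m => f (m + 1)) * -DeltaSeq g + -DeltaSeq f * g := by
      funext m
      simp only [DeltaSeq, Pi.add_apply, Pi.mul_apply, Pi.neg_apply]
      ring
    refine succ_iff.mpr ⟨fun m => mul_nonneg (hf0 m) (hg0 m), ?_⟩
    rw [product_rule]
    exact (ih (hf.mono.comp_add 1) hg').add (ih hf' hg.mono)

lemma inv_add (k : ℕ) {c : ℝ} (hc : 0 < c) : CMUpTo k fun m : ℕ => ((m : ℝ) + c)⁻¹ := by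
  induction k generalizing c with
  | zero => exact zero_iff.mpr fun m => by positivity
  | succ k ih =>
    refine succ_iff.mpr ⟨fun m => by positivity, ?_⟩
    have hdiff : -DeltaSeq (fun m : ℕ => ((m : ℝ) + c)⁻¹)
        = (fun m : ℕ => ((m : ℝ) + c)⁻¹) * fun m : ℕ => ((m : ℝ) + (c + 1))⁻¹ := by
      funext m
      have : (0 : ℝ) < m + c := by positivity
      simp only [DeltaSeq, Pi.neg_apply, Pi.mul_apply, Nat.cast_succ]
      field_simp
      ring
    rw [hdiff]
    exact (ih hc).mul (ih (by linarith))

end CMUpTo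

lemma cm_iff_forall_cmUpTo {x : ℕ → ℝ} : CM x ↔ ∀ k, CMUpTo k x :=
  ⟨fun h _ i _ => h i, fun h k => h k k le_rfl⟩

namespace CM

variable {f g x : ℕ → ℝ}

lemma mul (hf : CM f) (hg : CM g) : CM (f * g) :=
  cm_iff_forall_cmUpTo.mpr fun k =>
    (cm_iff_forall_cmUpTo.mp hf k).mul (cm_iff_forall_cmUpTo.mp hg k)

lemma pow_succ (hf : CM f) (n : ℕ) : CM (f ^ (n + 1)) := by
  induction n with
  | zero => simpa using hf
  | succ n ih => rw [_root_.pow_succ]; exact ih.mul hf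

lemma comp_add (hx : CM x) (c : ℕ) : CM fun m => x (m + c) :=
  cm_iff_forall_cmUpTo.mpr fun k => (cm_iff_forall_cmUpTo.mp hx k).comp_add c

lemma neg_one_pow_mul_iterate (hx : CM x) (j : ℕ) :
    CM fun m => (-1 : ℝ) ^ j * DeltaSeq^[j] x m := by
  intro i m
  rw [iterate_deltaSeq_const_mul, ← Function.iterate_add_apply, ← mul_assoc, ← pow_add]
  exact hx (i + j) m

end CM

lemma cm_inv_add {c : ℝ} (hc : 0 < c) : CM fun m : ℕ => ((m : ℝ) + c)⁻¹ :=
  cm_iff_forall_cmUpTo.mpr fun k => CMUpTo.inv_add k hc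

lemma iterate_delta2_apply (x : ℕ → ℕ → ℝ) (j m : ℕ) :
    (Delta2^[j] x) m = DeltaSeq^[j] (x m) := by
  induction j generalizing x with
  | zero => rfl
  | succ j ih => exact ih (Delta2 x)

lemma iterate_delta1_apply (x : ℕ → ℕ → ℝ) (i m n : ℕ) :
    (Delta1^[i] x) m n = DeltaSeq^[i] (fun m' => x m' n) m := by
  induction i generalizing x with
  | zero => rfl
  | succ i ih => exact ih (Delta1 x)

lemma jointCM_of_forall_cm {x : ℕ → ℕ → ℝ}
    (h : ∀ j n, CM fun m => (-1 : ℝ) ^ j * (Delta2^[j] x) m n) : JointCM x := by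
  intro i j m n
  have := h j n i m
  rwa [iterate_deltaSeq_const_mul, ← mul_assoc, ← pow_add, ← iterate_delta1_apply] at this

lemma jointCM_mul_comp_add {u w : ℕ → ℝ} (hu : CM u) (hw : CM w) :
    JointCM fun m n => u m * w (m + n) := by
  refine jointCM_of_forall_cm fun j n => ?_
  have hdiff : (fun m => (-1 : ℝ) ^ j * (Delta2^[j] fun m n => u m * w (m + n)) m n)
      = u * fun m => (-1 : ℝ) ^ j * DeltaSeq^[j] w (m + n) := by
    funext m
    simp only [iterate_delta2_apply, Pi.mul_apply, add_comm m]
    rw [iterate_deltaSeq_const_mul, iterate_deltaSeq_comp_add]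
    ring
  rw [hdiff]
  exact hu.mul ((hw.neg_one_pow_mul_iterate j).comp_add n)

lemma jointCM_of_hasSum {ι : Type*} {t : ι → ℕ → ℕ → ℝ} {x : ℕ → ℕ → ℝ}
    (ht : ∀ k, JointCM (t k)) (h : ∀ m n, HasSum (fun k => t k m n) (x m n)) : JointCM x := by
  intro i j m n
  have hdiff : HasSum (fun k => (Delta1^[i] (Delta2^[j] (t k))) m n)
      ((Delta1^[i] (Delta2^[j] x)) m n) := by
    simp only [iterate_delta1_apply, iterate_delta2_apply]
    exact hasSum_iterate_deltaSeq (fun m' => hasSum_iterate_deltaSeq (h m') j n) i m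
  exact (hdiff.mul_left _).nonneg fun k => ht k i j m n

lemma hasSum_inv_pow_succ {r : ℝ} (hr : 1 < r) : HasSum (fun k : ℕ => r⁻¹ ^ (k + 1)) (r - 1)⁻¹ := by
  have hsum := (hasSum_geometric_of_lt_one (by positivity) (inv_lt_one_of_one_lt₀ hr)).mul_left r⁻¹
  have hr0 : r ≠ 0 := by positivity
  have hr1 : r - 1 ≠ 0 := by linarith
  rw [show (r - 1)⁻¹ = r⁻¹ * (1 - r⁻¹)⁻¹ by field_simp]
  simpa only [_root_.pow_succ'] using hsum

/-- Remark: the net `(m,n) ↦ 1/((m+1)(m+3) + (m+2)n)` is joint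
completely monotone, even though with `b₁ = 1, b₂ = 3, a₁ = 2` neither
`b₁·b₂ ≤ a₁` nor `b₁ + b₂ ≤ a₁` holds. -/
theorem remark_example_jointCM :
    JointCM (fun m n : ℕ =>
        1 / (((m : ℝ) + 1) * ((m : ℝ) + 3) + ((m : ℝ) + 2) * n)) ∧
    ¬ ((1 : ℝ) * 3 ≤ 2) ∧ ¬ ((1 : ℝ) + 3 ≤ 2) := by
  refine ⟨?_, by norm_num, by norm_num⟩
  have hu (k : ℕ) : CM ((fun m : ℕ => ((m : ℝ) + 2)⁻¹) ^ (k + 1)) :=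
    (cm_inv_add two_pos).pow_succ k
  refine jointCM_of_hasSum (fun k => jointCM_mul_comp_add (hu k) (hu k)) fun m n => ?_
  have hr : 1 < ((m : ℝ) + 2) * ((m : ℝ) + n + 2) := by nlinarith [m.cast_nonneg (α := ℝ)]
  convert hasSum_inv_pow_succ hr using 1
  · funext k
    simp only [Pi.pow_apply, Nat.cast_add, mul_inv, mul_pow]
  · rw [one_div]
    congr 1
    ring
end
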